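/- Let n ≥ 2, let γ : ℝ → ℝⁿ be smooth and nondegenerate on [-2,2], let e₁(t), …, e_n(t) be its Frenet frame (Gram–Schmidt orthonormalization of γ^{(1)}(t), …, γ^{(n)}(t)), and suppose the n-th component e_{n,n}(t) of e_n(t) is nonzero for all t ∈ [-2,2]. Define G(t) := e_n(t)/e_{n,n}(t). Then for every t ∈ [-2,2] and every 1 ≤ r ≤ n−1: (i) G^{(r)}(t) lies in the linear span of {e_{n-r}(t), …, e_n(t)}, and (ii) G^{(r)}(t) · e_{n-r}(t) ≠ 0. -/

import Mathlib

open MeasureTheory Real Set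

/-- The Frenet frame of a curve `γ`: the Gram–Schmidt orthonormalization of the derivatives
`γ^{(1)}(t), …, γ^{(n)}(t)`. -/
noncomputable def frenet (n : ℕ) (γ : ℝ → EuclideanSpace ℝ (Fin n)) (t : ℝ) :
    Fin n → EuclideanSpace ℝ (Fin n) :=
  @InnerProductSpace.gramSchmidtNormed ℝ (EuclideanSpace ℝ (Fin n)) _ _ _ (Fin n) _ _
    (inferInstance : WellFoundedLT (Fin n)) (fun i : Fin n => iteratedDeriv (i.1 + 1) γ t)

open scoped ContDiff RealInnerProductSpace

lemma one_le_inf : (1 : WithTop ℕ∞) ≤ ∞ := by exact_mod_cast le_top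
lemma inf_add_one : (∞ + 1 : WithTop ℕ∞) ≤ ∞ := by norm_num

open scoped RealInnerProductSpace

variable {n : ℕ}

noncomputable def GS (f : Fin n → EuclideanSpace ℝ (Fin n)) : Fin n → EuclideanSpace ℝ (Fin n) :=
  @InnerProductSpace.gramSchmidt ℝ _ _ _ _ (Fin n) _ _ (inferInstance : WellFoundedLT (Fin n)) f
noncomputable def GSN (f : Fin n → EuclideanSpace ℝ (Fin n)) : Fin n → EuclideanSpace ℝ (Fin n) :=
  @InnerProductSpace.gramSchmidtNormed ℝ _ _ _ _ (Fin n) _ _ (inferInstance : WellFoundedLT (Fin n)) f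

section basic
variable (f : Fin n → EuclideanSpace ℝ (Fin n))

lemma GSN_eq (i : Fin n) : GSN f i = (‖GS f i‖ : ℝ)⁻¹ • GS f i := rfl

lemma GS_def (i : Fin n) :
    GS f i = f i - ∑ j ∈ Finset.Iio i, ((⟪GS f j, f i⟫ : ℝ) / (‖GS f j‖:ℝ) ^ 2) • GS f j := by
  have h := @InnerProductSpace.gramSchmidt_def'' ℝ _ _ _ _ (Fin n) _ _ (inferInstance : WellFoundedLT (Fin n)) f i
  exact eq_sub_of_add_eq h.symm

lemma GS_ne_zero {f : Fin n → EuclideanSpace ℝ (Fin n)} (h : LinearIndependent ℝ f) (i : Fin n) :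
    GS f i ≠ 0 :=
  @InnerProductSpace.gramSchmidt_ne_zero ℝ _ _ _ _ (Fin n) _ _ (inferInstance : WellFoundedLT (Fin n)) f i h

lemma GSN_orthonormal {f : Fin n → EuclideanSpace ℝ (Fin n)} (h : LinearIndependent ℝ f) :
    Orthonormal ℝ (GSN f) :=
  @InnerProductSpace.gramSchmidtNormed_orthonormal ℝ _ _ _ _ (Fin n) _ _ (inferInstance : WellFoundedLT (Fin n)) f h

lemma GS_orthogonal {a b : Fin n} (h : a ≠ b) : ⟪GS f a, GS f b⟫ = 0 :=
  @InnerProductSpace.gramSchmidt_orthogonal ℝ _ _ _ _ (Fin n) _ _ (inferInstance : WellFoundedLT (Fin n)) f a b h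

lemma span_GS_Iio (c : Fin n) :
    Submodule.span ℝ (GS f '' Set.Iio c) = Submodule.span ℝ (f '' Set.Iio c) :=
  @InnerProductSpace.span_gramSchmidt_Iio ℝ _ _ _ _ (Fin n) _ _ (inferInstance : WellFoundedLT (Fin n)) f c

lemma GS_mem_span (i : Fin n) : GS f i ∈ Submodule.span ℝ (f '' Set.Iic i) :=
  @InnerProductSpace.gramSchmidt_mem_span ℝ _ _ _ _ (Fin n) _ _ (inferInstance : WellFoundedLT (Fin n)) f i i le_rfl

lemma GSN_mem_span (i : Fin n) : GSN f i ∈ Submodule.span ℝ (f '' Set.Iic i) :=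
  Submodule.smul_mem _ _ (GS_mem_span f i)

/-- Anything in the span of vectors `f m`, `m < k`, is orthogonal to `GSN f k`. -/
lemma inner_GSN_eq_zero {f : Fin n → EuclideanSpace ℝ (Fin n)} {k : Fin n}
    {x : EuclideanSpace ℝ (Fin n)} {s : Set (Fin n)} (hs : ∀ m ∈ s, m < k)
    (hx : x ∈ Submodule.span ℝ (f '' s)) : ⟪x, GSN f k⟫ = 0 := by
  have hx' : x ∈ Submodule.span ℝ (GS f '' Set.Iio k) := by
    rw [span_GS_Iio]
    exact Submodule.span_mono (Set.image_mono fun m hm => hs m hm) hx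
  clear hx
  induction hx' using Submodule.span_induction with
  | mem y hy =>
    obtain ⟨m, hm, rfl⟩ := hy
    rw [GSN_eq, real_inner_smul_right, GS_orthogonal f (ne_of_lt hm), mul_zero]
  | zero => exact inner_zero_left _
  | add y z _ _ hy hz => rw [inner_add_left, hy, hz, add_zero]
  | smul a y _ hy => rw [real_inner_smul_left, hy, mul_zero]

lemma inner_f_GSN_self {f : Fin n → EuclideanSpace ℝ (Fin n)} (h : LinearIndependent ℝ f)
    (j : Fin n) : ⟪f j, GSN f j⟫ = ‖GS f j‖ := by
  have hd := GS_def f j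
  have hmem : f j - GS f j ∈ Submodule.span ℝ (f '' Set.Iio j) := by
    rw [← span_GS_Iio]
    have : f j - GS f j = ∑ i ∈ Finset.Iio j, ((⟪GS f i, f j⟫ : ℝ) / (‖GS f i‖:ℝ) ^ 2) • GS f i := by
      rw [hd]; abel
    rw [this]
    exact Submodule.sum_mem _ fun i hi => Submodule.smul_mem _ _
      (Submodule.subset_span ⟨i, Finset.mem_Iio.mp hi, rfl⟩)
  have h1 : ⟪f j - GS f j, GSN f j⟫ = 0 :=
    inner_GSN_eq_zero (fun m hm => hm) hmem
  have h2 : ⟪f j, GSN f j⟫ = ⟪GS f j, GSN f j⟫ := by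
    have := inner_sub_left (𝕜 := ℝ) (f j) (GS f j) (GSN f j)
    rw [h1] at this
    linarith [this]
  rw [h2, GSN_eq, real_inner_smul_right, real_inner_self_eq_norm_sq]
  have hne : ‖GS f j‖ ≠ 0 := norm_ne_zero_iff.mpr (GS_ne_zero h j)
  field_simp

lemma GSN_ne_zero {f : Fin n → EuclideanSpace ℝ (Fin n)} (h : LinearIndependent ℝ f) (i : Fin n) :
    GSN f i ≠ 0 := by
  rw [GSN_eq]
  exact smul_ne_zero (inv_ne_zero (norm_ne_zero_iff.mpr (GS_ne_zero h i))) (GS_ne_zero h i)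

lemma GSN_expand {f : Fin n → EuclideanSpace ℝ (Fin n)} (h : LinearIndependent ℝ f)
    (x : EuclideanSpace ℝ (Fin n)) : ∑ j, ⟪GSN f j, x⟫ • GSN f j = x := by
  have hcard : Module.finrank ℝ (EuclideanSpace ℝ (Fin n)) = Fintype.card (Fin n) := by
    simp [finrank_euclideanSpace]
  have hB := @InnerProductSpace.gramSchmidtOrthonormalBasis ℝ _ _ _ _ (Fin n) _ _
    (inferInstance : WellFoundedLT (Fin n)) _ _ hcard f
  have hBa : ∀ j : Fin n, (@InnerProductSpace.gramSchmidtOrthonormalBasis ℝ _ _ _ _ (Fin n) _ _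
      (inferInstance : WellFoundedLT (Fin n)) _ _ hcard f) j = GSN f j := fun j =>
    @InnerProductSpace.gramSchmidtOrthonormalBasis_apply ℝ _ _ _ _ (Fin n) _ _
      (inferInstance : WellFoundedLT (Fin n)) _ _ hcard f j (GSN_ne_zero h j)
  have := (@InnerProductSpace.gramSchmidtOrthonormalBasis ℝ _ _ _ _ (Fin n) _ _
      (inferInstance : WellFoundedLT (Fin n)) _ _ hcard f).sum_repr' x
  simpa [hBa] using this

lemma sum_mul_eq_inner (x y : EuclideanSpace ℝ (Fin n)) : ∑ i, x i * y i = ⟪x, y⟫ := by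
  rw [PiLp.inner_apply]
  simp [RCLike.inner_apply]
  exact Finset.sum_congr rfl fun _ _ => mul_comm _ _

end basic
section smooth
variable {n : ℕ} {f : ℝ → Fin n → EuclideanSpace ℝ (Fin n)} {U : Set ℝ}

lemma contDiffOn_GS (hU : IsOpen U) (hf : ∀ i, ContDiff ℝ ∞ (fun t => f t i))
    (hli : ∀ t ∈ U, LinearIndependent ℝ (f t)) :
    ∀ i : Fin n, ContDiffOn ℝ ∞ (fun t => GS (f t) i) U := by
  suffices H : ∀ m : ℕ, ∀ i : Fin n, (i : ℕ) < m → ContDiffOn ℝ ∞ (fun t => GS (f t) i) U by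
    exact fun i => H (i + 1) i (Nat.lt_succ_self _)
  intro m
  induction m with
  | zero => exact fun i hi => absurd hi (Nat.not_lt_zero _)
  | succ m ih =>
    intro i him
    rcases Nat.lt_or_ge (i : ℕ) m with h | h
    · exact ih i h
    have : (fun t => GS (f t) i) = fun t =>
        f t i - ∑ j ∈ Finset.Iio i, ((⟪GS (f t) j, f t i⟫ : ℝ) / (‖GS (f t) j‖ : ℝ) ^ 2) • GS (f t) j :=
      funext fun t => GS_def (f t) i
    rw [this]
    refine ((hf i).contDiffOn).sub (ContDiffOn.sum fun j hj => ?_)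
    have hji : j < i := Finset.mem_Iio.mp hj
    have hgs : ContDiffOn ℝ ∞ (fun t => GS (f t) j) U := ih j (lt_of_lt_of_le hji (by omega))
    have hne : ∀ t ∈ U, GS (f t) j ≠ 0 := fun t ht => GS_ne_zero (hli t ht) j
    refine ContDiffOn.smul (ContDiffOn.div (hgs.inner ℝ ((hf i).contDiffOn))
      (hgs.norm_sq ℝ) ?_) hgs
    intro t ht
    exact pow_ne_zero _ (norm_ne_zero_iff.mpr (hne t ht))

lemma contDiffOn_GSN (hU : IsOpen U) (hf : ∀ i, ContDiff ℝ ∞ (fun t => f t i))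
    (hli : ∀ t ∈ U, LinearIndependent ℝ (f t)) (i : Fin n) :
    ContDiffOn ℝ ∞ (fun t => GSN (f t) i) U := by
  have hgs := contDiffOn_GS hU hf hli i
  have hne : ∀ t ∈ U, GS (f t) i ≠ 0 := fun t ht => GS_ne_zero (hli t ht) i
  have : (fun t => GSN (f t) i) = fun t => (‖GS (f t) i‖ : ℝ)⁻¹ • GS (f t) i :=
    funext fun t => GSN_eq (f t) i
  rw [this]
  exact ((hgs.norm ℝ hne).inv (fun t ht => norm_ne_zero_iff.mpr (hne t ht))).smul hgs
end smooth
section derivs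
variable {n : ℕ} {f : ℝ → Fin n → EuclideanSpace ℝ (Fin n)} {U : Set ℝ}
variable (hU : IsOpen U) (hf : ∀ i, ContDiff ℝ ∞ (fun t => f t i))
  (hli : ∀ t ∈ U, LinearIndependent ℝ (f t))
  (hder : ∀ (i j : Fin n), (j : ℕ) = (i : ℕ) + 1 → ∀ t, deriv (fun s => f s i) t = f t j)

include hU hf hli

lemma diffAt_GS {t : ℝ} (ht : t ∈ U) (i : Fin n) :
    DifferentiableAt ℝ (fun s => GS (f s) i) t :=
  ((contDiffOn_GS hU hf hli i).differentiableOn (by simp)).differentiableAt (hU.mem_nhds ht)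

lemma diffAt_GSN {t : ℝ} (ht : t ∈ U) (i : Fin n) :
    DifferentiableAt ℝ (fun s => GSN (f s) i) t :=
  ((contDiffOn_GSN hU hf hli i).differentiableOn (by simp)).differentiableAt (hU.mem_nhds ht)

include hder

lemma deriv_GS_sub_mem :
    ∀ (i j : Fin n), (j : ℕ) = (i : ℕ) + 1 → ∀ t ∈ U,
      deriv (fun s => GS (f s) i) t - f t j ∈ Submodule.span ℝ (f t '' Set.Iic i) := by
  suffices H : ∀ m : ℕ, ∀ i : Fin n, (i : ℕ) < m → ∀ (j : Fin n), (j : ℕ) = (i : ℕ) + 1 →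
      ∀ t ∈ U, deriv (fun s => GS (f s) i) t - f t j ∈ Submodule.span ℝ (f t '' Set.Iic i) by
    exact fun i j hij t ht => H ((i : ℕ) + 1) i (Nat.lt_succ_self _) j hij t ht
  intro m
  induction m with
  | zero => exact fun i hi => absurd hi (Nat.not_lt_zero _)
  | succ m ih =>
    intro i him j hij t ht
    rcases Nat.lt_or_ge (i : ℕ) m with h | h
    · exact ih i h j hij t ht
    -- set up HasDerivAt for the Gram–Schmidt recursion
    have hfd : HasDerivAt (fun s => f s i) (f t j) t := by
      have h1 := (((hf i).differentiable (by simp)) t).hasDerivAt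
      rwa [hder i j hij t] at h1
    set c : Fin n → ℝ → ℝ := fun k s => (⟪GS (f s) k, f s i⟫ : ℝ) / (‖GS (f s) k‖ : ℝ) ^ 2 with hc
    have hcd : ∀ k, k < i → DifferentiableAt ℝ (c k) t := by
      intro k hk
      refine DifferentiableAt.div ?_ ?_ ?_
      · exact (diffAt_GS hU hf hli ht k).inner ℝ (((hf i).differentiable (by simp)) t)
      · exact DifferentiableAt.norm_sq ℝ (diffAt_GS hU hf hli ht k)
      · exact pow_ne_zero _ (norm_ne_zero_iff.mpr (GS_ne_zero (hli t ht) k))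
    have hgsd : ∀ k, DifferentiableAt ℝ (fun s => GS (f s) k) t :=
      fun k => diffAt_GS hU hf hli ht k
    have Hd : HasDerivAt (fun s => GS (f s) i)
        (f t j - ∑ k ∈ Finset.Iio i,
          (c k t • deriv (fun s => GS (f s) k) t + deriv (c k) t • GS (f t) k)) t := by
      have heq : (fun s => GS (f s) i) = fun s =>
          f s i - ∑ k ∈ Finset.Iio i, c k s • GS (f s) k := funext fun s => GS_def (f s) i
      rw [heq]
      refine hfd.sub (HasDerivAt.fun_sum fun k hk => ?_)
      exact ((hcd k (Finset.mem_Iio.mp hk)).hasDerivAt).smul ((hgsd k).hasDerivAt)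
    rw [Hd.deriv]
    have : f t j - ∑ k ∈ Finset.Iio i,
        (c k t • deriv (fun s => GS (f s) k) t + deriv (c k) t • GS (f t) k) - f t j
        = - ∑ k ∈ Finset.Iio i,
          (c k t • deriv (fun s => GS (f s) k) t + deriv (c k) t • GS (f t) k) := by abel
    rw [this]
    refine Submodule.neg_mem _ (Submodule.sum_mem _ fun k hk => ?_)
    have hki : k < i := Finset.mem_Iio.mp hk
    have hsub : Submodule.span ℝ (f t '' Set.Iic k) ≤ Submodule.span ℝ (f t '' Set.Iic i) :=
      Submodule.span_mono (Set.image_mono fun m hm => le_trans hm (le_of_lt hki))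
    refine Submodule.add_mem _ ?_ (Submodule.smul_mem _ _ (hsub (GS_mem_span (f t) k)))
    have hkn : (k : ℕ) + 1 < n := by have := i.2; omega
    set k' : Fin n := ⟨(k : ℕ) + 1, hkn⟩ with hk'
    have hmem := ih k (by omega) k' rfl t ht
    have hmem1 : deriv (fun s => GS (f s) k) t - f t k'
        ∈ Submodule.span ℝ (f t '' Set.Iic i) := hsub hmem
    have hmem2 : f t k' ∈ Submodule.span ℝ (f t '' Set.Iic i) := by
      refine Submodule.subset_span ⟨k', ?_, rfl⟩
      show k' ≤ i
      rw [Fin.le_def]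
      simp only [hk']
      omega
    have hsplit : deriv (fun s => GS (f s) k) t
        = (deriv (fun s => GS (f s) k) t - f t k') + f t k' := by abel
    rw [hsplit]
    exact Submodule.smul_mem _ _ (Submodule.add_mem _ hmem1 hmem2)

lemma deriv_GSN_repr {t : ℝ} (ht : t ∈ U) (i : Fin n) :
    deriv (fun s => GSN (f s) i) t
      = deriv (fun s => (‖GS (f s) i‖ : ℝ)⁻¹) t • GS (f t) i
        + (‖GS (f t) i‖ : ℝ)⁻¹ • deriv (fun s => GS (f s) i) t := by
  have hgs := diffAt_GS hU hf hli ht i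
  have hne : GS (f t) i ≠ 0 := GS_ne_zero (hli t ht) i
  have hrho : DifferentiableAt ℝ (fun s => (‖GS (f s) i‖ : ℝ)⁻¹) t := by
    refine DifferentiableAt.inv ?_ (norm_ne_zero_iff.mpr hne)
    exact hgs.norm ℝ hne
  have Hd : HasDerivAt (fun s => GSN (f s) i)
      (deriv (fun s => (‖GS (f s) i‖ : ℝ)⁻¹) t • GS (f t) i
        + (‖GS (f t) i‖ : ℝ)⁻¹ • deriv (fun s => GS (f s) i) t) t := by
    have heq : (fun s => GSN (f s) i) = fun s => (‖GS (f s) i‖ : ℝ)⁻¹ • GS (f s) i :=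
      funext fun s => GSN_eq (f s) i
    rw [heq]
    have := (hgs.hasDerivAt).const_smul ((‖GS (f t) i‖ : ℝ)⁻¹)
    have h2 := (hrho.hasDerivAt).smul (hgs.hasDerivAt)
    rw [add_comm]
    exact h2
  exact Hd.deriv

lemma deriv_GSN_mem {t : ℝ} (ht : t ∈ U) (i j : Fin n) (hij : (j : ℕ) = (i : ℕ) + 1) :
    deriv (fun s => GSN (f s) i) t ∈ Submodule.span ℝ (f t '' Set.Iic j) := by
  rw [deriv_GSN_repr hU hf hli hder ht i]
  have hij2 : i ≤ j := by rw [Fin.le_def, hij]; omega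
  have hsub : Submodule.span ℝ (f t '' Set.Iic i) ≤ Submodule.span ℝ (f t '' Set.Iic j) :=
    Submodule.span_mono (Set.image_mono fun m hm => le_trans hm hij2)
  refine Submodule.add_mem _ (Submodule.smul_mem _ _ (hsub (GS_mem_span (f t) i))) ?_
  have hmem := deriv_GS_sub_mem hU hf hli hder i j hij t ht
  have hsplit : deriv (fun s => GS (f s) i) t
      = (deriv (fun s => GS (f s) i) t - f t j) + f t j := by abel
  rw [hsplit]
  exact Submodule.smul_mem _ _ (Submodule.add_mem _ (hsub hmem)
    (Submodule.subset_span (Set.mem_image_of_mem _ (Set.mem_Iic.mpr le_rfl))))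

/-- Frenet–Serret (upper part): the derivative of `e i` is orthogonal to `e k` for `k > i + 1`. -/
lemma inner_deriv_GSN_zero_upper {t : ℝ} (ht : t ∈ U) (i k : Fin n)
    (hik : (i : ℕ) + 1 < (k : ℕ)) :
    ⟪deriv (fun s => GSN (f s) i) t, GSN (f t) k⟫ = 0 := by
  have hjn : (i : ℕ) + 1 < n := lt_trans hik k.2
  refine inner_GSN_eq_zero (s := Set.Iic (⟨(i : ℕ) + 1, hjn⟩ : Fin n)) (fun m hm => ?_)
    (deriv_GSN_mem hU hf hli hder ht i ⟨(i : ℕ) + 1, hjn⟩ rfl)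
  have h5 := Set.mem_Iic.mp hm
  rw [Fin.le_def] at h5
  simp only [Fin.val_mk] at h5
  rw [Fin.lt_def]
  omega

/-- Frenet–Serret: `⟪e i', e (i+1)⟫ ≠ 0`. -/
lemma inner_deriv_GSN_next {t : ℝ} (ht : t ∈ U) (i j : Fin n) (hij : (j : ℕ) = (i : ℕ) + 1) :
    ⟪deriv (fun s => GSN (f s) i) t, GSN (f t) j⟫ ≠ 0 := by
  have hij' : i < j := by rw [Fin.lt_def]; omega
  have h1 : ⟪GS (f t) i, GSN (f t) j⟫ = 0 :=
    inner_GSN_eq_zero (s := Set.Iic i) (fun m hm => lt_of_le_of_lt hm hij')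
      (GS_mem_span (f t) i)
  have h2 : ⟪deriv (fun s => GS (f s) i) t - f t j, GSN (f t) j⟫ = 0 :=
    inner_GSN_eq_zero (s := Set.Iic i) (fun m hm => lt_of_le_of_lt hm hij')
      (deriv_GS_sub_mem hU hf hli hder i j hij t ht)
  have h3 : ⟪f t j, GSN (f t) j⟫ = ‖GS (f t) j‖ := inner_f_GSN_self (hli t ht) j
  have h4 : ⟪deriv (fun s => GS (f s) i) t, GSN (f t) j⟫ = ‖GS (f t) j‖ := by
    have := inner_sub_left (𝕜 := ℝ) (deriv (fun s => GS (f s) i) t) (f t j) (GSN (f t) j)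
    rw [h2, h3] at this
    linarith
  rw [deriv_GSN_repr hU hf hli hder ht i, inner_add_left, real_inner_smul_left, h1, mul_zero,
    real_inner_smul_left, h4, zero_add]
  exact mul_ne_zero (inv_ne_zero (norm_ne_zero_iff.mpr (GS_ne_zero (hli t ht) i)))
    (norm_ne_zero_iff.mpr (GS_ne_zero (hli t ht) j))

/-- Antisymmetry of the frame derivative coefficients. -/
lemma inner_deriv_GSN_antisymm {t : ℝ} (ht : t ∈ U) (i k : Fin n) (hik : i ≠ k) :
    ⟪deriv (fun s => GSN (f s) i) t, GSN (f t) k⟫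
      = - ⟪GSN (f t) i, deriv (fun s => GSN (f s) k) t⟫ := by
  have h0 : ∀ s ∈ U, ⟪GSN (f s) i, GSN (f s) k⟫ = (0 : ℝ) :=
    fun s hs => (GSN_orthonormal (hli s hs)).2 hik
  have hev : (fun s => (⟪GSN (f s) i, GSN (f s) k⟫ : ℝ)) =ᶠ[nhds t] fun _ => (0 : ℝ) :=
    Filter.eventually_of_mem (hU.mem_nhds ht) h0
  have hder0 : deriv (fun s => (⟪GSN (f s) i, GSN (f s) k⟫ : ℝ)) t = 0 := by
    rw [hev.deriv_eq, deriv_const]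
  rw [deriv_inner_apply (𝕜 := ℝ) (diffAt_GSN hU hf hli ht i) (diffAt_GSN hU hf hli ht k)] at hder0
  linarith

lemma inner_deriv_GSN_zero_lower {t : ℝ} (ht : t ∈ U) (i k : Fin n)
    (hik : (k : ℕ) + 1 < (i : ℕ)) :
    ⟪deriv (fun s => GSN (f s) i) t, GSN (f t) k⟫ = 0 := by
  rw [inner_deriv_GSN_antisymm hU hf hli hder ht i k (by rw [Fin.ne_iff_vne]; omega)]
  rw [real_inner_comm, inner_deriv_GSN_zero_upper hU hf hli hder ht k i hik, neg_zero]

end derivs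

/-- For `G(t) = e_n(t)/e_{n,n}(t)`: the derivative `G^{(r)}(t)` lies in the span of
`e_{n-r}(t), …, e_n(t)` and has nonzero inner product with `e_{n-r}(t)`, for `1 ≤ r ≤ n-1`. -/
theorem G_derivative_span_and_nonvanishing
    {n : ℕ} (hn : 2 ≤ n) (γ : ℝ → EuclideanSpace ℝ (Fin n)) (hγ : ContDiff ℝ (⊤ : ℕ∞) γ)
    (hnondeg : ∀ t ∈ Set.Icc (-2 : ℝ) 2,
      (Matrix.of fun (i r : Fin n) => iteratedDeriv (r.1 + 1) γ t i).det ≠ 0)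
    (hlast : ∀ t ∈ Set.Icc (-2 : ℝ) 2,
      frenet n γ t ⟨n - 1, by omega⟩ ⟨n - 1, by omega⟩ ≠ 0)
    (G : ℝ → EuclideanSpace ℝ (Fin n))
    (hG : ∀ t, G t = (frenet n γ t ⟨n - 1, by omega⟩ ⟨n - 1, by omega⟩)⁻¹ •
      frenet n γ t ⟨n - 1, by omega⟩) :
    ∀ t ∈ Set.Icc (-2 : ℝ) 2, ∀ r : ℕ, 1 ≤ r → r ≤ n - 1 →
      iteratedDeriv r G t ∈
        Submodule.span ℝ (frenet n γ t '' {s : Fin n | n - r - 1 ≤ s.1}) ∧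
      ∑ i, iteratedDeriv r G t i * frenet n γ t ⟨n - r - 1, by omega⟩ i ≠ 0 := by
  -- the family of derivatives
  set f : ℝ → Fin n → EuclideanSpace ℝ (Fin n) :=
    fun t i => iteratedDeriv ((i : ℕ) + 1) γ t with hf_def
  have hfrenet : ∀ t, frenet n γ t = GSN (f t) := fun t => rfl
  have hγ' : ContDiff ℝ ∞ γ := hγ.of_le (by simp)
  have hfc : ∀ i : Fin n, ContDiff ℝ ∞ (fun t => f t i) := by
    intro i
    have : (fun t => f t i) = iteratedDeriv ((i : ℕ) + 1) γ := rfl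
    rw [this, iteratedDeriv_eq_iterate]
    exact hγ'.iterate_deriv _
  have hder : ∀ (i j : Fin n), (j : ℕ) = (i : ℕ) + 1 → ∀ t,
      deriv (fun s => f s i) t = f t j := by
    intro i j hij t
    show deriv (iteratedDeriv ((i : ℕ) + 1) γ) t = iteratedDeriv ((j : ℕ) + 1) γ t
    rw [← iteratedDeriv_succ, hij]
  -- the open set V where the curve is nondegenerate
  set M : ℝ → Matrix (Fin n) (Fin n) ℝ :=
    fun t => Matrix.of fun (i r : Fin n) => iteratedDeriv (r.1 + 1) γ t i with hM_def
  have hMcont : Continuous fun t => (M t).det := by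
    refine Continuous.matrix_det (continuous_pi fun i => continuous_pi fun r => ?_)
    exact (EuclideanSpace.proj i).continuous.comp ((hfc r).continuous)
  set V : Set ℝ := {t | (M t).det ≠ 0} with hV_def
  have hVopen : IsOpen V := isOpen_compl_singleton.preimage hMcont
  have hliV : ∀ t ∈ V, LinearIndependent ℝ (f t) := by
    intro t ht
    have hdet : (M t).det ≠ 0 := ht
    have hdetT : ((M t).transpose).det ≠ 0 := by rw [Matrix.det_transpose]; exact hdet
    have hunit : IsUnit ((M t).transpose) :=
      (Matrix.isUnit_iff_isUnit_det _).mpr (isUnit_iff_ne_zero.mpr hdetT)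
    have hli := Matrix.linearIndependent_rows_iff_isUnit.mpr hunit
    exact hli.map' (WithLp.linearEquiv 2 ℝ (Fin n → ℝ)).symm.toLinearMap
      (LinearEquiv.ker _)
  -- the last coordinate of the last frame vector, and the set U
  set L : Fin n := ⟨n - 1, by omega⟩ with hL_def
  set g : ℝ → ℝ := fun t => GSN (f t) L L with hg_def
  have hgcontV : ContinuousOn g V := by
    have h1 := (contDiffOn_GSN hVopen hfc hliV L).continuousOn
    exact ((EuclideanSpace.proj L).continuous.comp_continuousOn h1)
  set U : Set ℝ := V ∩ g ⁻¹' ({0}ᶜ) with hU_def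
  have hUopen : IsOpen U := hgcontV.isOpen_inter_preimage hVopen isOpen_compl_singleton
  have hUV : U ⊆ V := Set.inter_subset_left
  have hliU : ∀ t ∈ U, LinearIndependent ℝ (f t) := fun t ht => hliV t (hUV ht)
  have hgU : ∀ t ∈ U, g t ≠ 0 := fun t ht => ht.2
  have hIccU : Set.Icc (-2 : ℝ) 2 ⊆ U := by
    intro t ht
    refine ⟨hnondeg t ht, ?_⟩
    have := hlast t ht
    rw [hfrenet t] at this
    exact this
  -- smoothness of G on U
  have hGfun : G = fun t => (g t)⁻¹ • GSN (f t) L := by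
    funext t
    rw [hG t, hfrenet t]
  have hGsm : ContDiffOn ℝ ∞ G U := by
    rw [hGfun]
    refine ContDiffOn.smul (ContDiffOn.inv ?_ hgU) ((contDiffOn_GSN hUopen hfc hliU L))
    exact (EuclideanSpace.proj L).contDiff.comp_contDiffOn (contDiffOn_GSN hUopen hfc hliU L)
  have hGr : ∀ r : ℕ, ContDiffOn ℝ ∞ (iteratedDeriv r G) U := by
    intro r
    induction r with
    | zero => rw [iteratedDeriv_zero]; exact hGsm
    | succ r ih =>
      rw [iteratedDeriv_succ]
      exact ih.deriv_of_isOpen hUopen inf_add_one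
  have hGrd : ∀ (r : ℕ) (t : ℝ), t ∈ U → DifferentiableAt ℝ (iteratedDeriv r G) t :=
    fun r t ht => ((hGr r).differentiableOn (by simp)).differentiableAt (hUopen.mem_nhds ht)
  -- the key induction
  have KEY : ∀ r : ℕ, r ≤ n - 1 → ∀ t ∈ U,
      (∀ k : Fin n, (k : ℕ) < n - 1 - r → ⟪iteratedDeriv r G t, GSN (f t) k⟫ = 0) ∧
      ⟪iteratedDeriv r G t, GSN (f t) ⟨n - 1 - r, by omega⟩⟫ ≠ 0 := by
    intro r
    induction r with
    | zero =>
      intro _ t ht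
      have horth := GSN_orthonormal (hliU t ht)
      rw [iteratedDeriv_zero, hGfun]
      constructor
      · intro k hk
        have hkL : L ≠ k := by rw [Fin.ne_iff_vne]; simp [hL_def]; omega
        rw [real_inner_smul_left, horth.2 hkL, mul_zero]
      · have h1 : ⟪GSN (f t) L, GSN (f t) L⟫ = 1 := by
          rw [real_inner_self_eq_norm_sq, horth.1 L]; norm_num
        have hidx : (⟨n - 1 - 0, by omega⟩ : Fin n) = L := rfl
        rw [hidx, real_inner_smul_left, h1, mul_one]
        exact inv_ne_zero (hgU t ht)
    | succ r ih =>
      intro hr1 t ht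
      have hr : r ≤ n - 1 := by omega
      have ihU := ih hr
      -- general formula for the inner products of the next derivative
      have hform : ∀ k : Fin n, (k : ℕ) < n - 1 - r →
          ⟪iteratedDeriv (r + 1) G t, GSN (f t) k⟫
            = - ∑ j : Fin n, ⟪GSN (f t) j, iteratedDeriv r G t⟫
                * ⟪deriv (fun s => GSN (f s) k) t, GSN (f t) j⟫ := by
        intro k hk
        have hzero : ∀ s ∈ U, (fun s => ⟪iteratedDeriv r G s, GSN (f s) k⟫) s = (0 : ℝ) :=
          fun s hs => (ihU s hs).1 k hk
        have hev : (fun s => (⟪iteratedDeriv r G s, GSN (f s) k⟫ : ℝ))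
            =ᶠ[nhds t] fun _ => (0 : ℝ) :=
          Filter.eventually_of_mem (hUopen.mem_nhds ht) hzero
        have hd0 : deriv (fun s => (⟪iteratedDeriv r G s, GSN (f s) k⟫ : ℝ)) t = 0 := by
          rw [hev.deriv_eq, deriv_const]
        rw [deriv_inner_apply (𝕜 := ℝ) (hGrd r t ht) (diffAt_GSN hUopen hfc hliU ht k)]
          at hd0
        rw [← iteratedDeriv_succ] at hd0
        have hswap : ⟪iteratedDeriv (r + 1) G t, GSN (f t) k⟫
            = - ⟪iteratedDeriv r G t, deriv (fun s => GSN (f s) k) t⟫ := by linarith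
        rw [hswap]
        congr 1
        conv_lhs => rw [← GSN_expand (hliU t ht) (iteratedDeriv r G t)]
        rw [sum_inner]
        refine Finset.sum_congr rfl fun j _ => ?_
        rw [real_inner_smul_left, real_inner_comm (GSN (f t) j)]
      refine ⟨?_, ?_⟩
      · intro k hk
        rw [hform k (by omega), Finset.sum_eq_zero, neg_zero]
        intro j _
        rcases Nat.lt_or_ge (j : ℕ) (n - 1 - r) with hj | hj
        · rw [real_inner_comm, (ihU t ht).1 j hj, zero_mul]
        · rw [inner_deriv_GSN_zero_upper hUopen hfc hliU hder ht k j (by omega), mul_zero]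
      · set j0 : Fin n := ⟨n - 1 - r, by omega⟩ with hj0
        set k0 : Fin n := ⟨n - 1 - (r + 1), by omega⟩ with hk0
        have hk0lt : (k0 : ℕ) < n - 1 - r := by simp [hk0]; omega
        rw [hform k0 hk0lt]
        have hsingle : ∑ j : Fin n, ⟪GSN (f t) j, iteratedDeriv r G t⟫
              * ⟪deriv (fun s => GSN (f s) k0) t, GSN (f t) j⟫
            = ⟪GSN (f t) j0, iteratedDeriv r G t⟫
              * ⟪deriv (fun s => GSN (f s) k0) t, GSN (f t) j0⟫ := by
          refine Finset.sum_eq_single j0 (fun j _ hj => ?_) (fun h => absurd (Finset.mem_univ _) h)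
          rcases Nat.lt_or_ge (j : ℕ) (n - 1 - r) with hjlt | hjge
          · rw [real_inner_comm, (ihU t ht).1 j hjlt, zero_mul]
          · have hjgt : (k0 : ℕ) + 1 < (j : ℕ) := by
              have : (j : ℕ) ≠ n - 1 - r := fun hc => hj (Fin.ext hc)
              simp only [hk0]; omega
            rw [inner_deriv_GSN_zero_upper hUopen hfc hliU hder ht k0 j hjgt, mul_zero]
        rw [hsingle]
        refine neg_ne_zero.mpr (mul_ne_zero ?_ ?_)
        · rw [real_inner_comm]
          exact (ihU t ht).2
        · exact inner_deriv_GSN_next hUopen hfc hliU hder ht k0 j0 (by simp [hj0, hk0]; omega)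
  -- conclusion
  intro t htIcc r hr1 hrn
  have ht : t ∈ U := hIccU htIcc
  have hK := KEY r hrn t ht
  constructor
  · rw [hfrenet t, ← GSN_expand (hliU t ht) (iteratedDeriv r G t)]
    refine Submodule.sum_mem _ fun j _ => ?_
    rcases Nat.lt_or_ge (j : ℕ) (n - 1 - r) with hj | hj
    · rw [real_inner_comm, hK.1 j hj, zero_smul]
      exact Submodule.zero_mem _
    · refine Submodule.smul_mem _ _ (Submodule.subset_span ⟨j, ?_, rfl⟩)
      simp only [Set.mem_setOf_eq]
      omega
  · rw [hfrenet t]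
    have hidx : (⟨n - r - 1, by omega⟩ : Fin n) = (⟨n - 1 - r, by omega⟩ : Fin n) := by
      apply Fin.ext
      simp only [Fin.val_mk]
      omega
    rw [hidx, sum_mul_eq_inner]
    exact hK.2
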